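/- arXiv:1403.4378 — 2 statements merged into one kernel-verified Lean document; each statement's English description precedes it below -/
import Mathlib

section
/- For q ≥ 1, the Jensen-Tsallis q-difference of n probability mass functions is nonnegative: T_q(p₁,...,pₙ) = H_q(p̄) - n^{-q} Σᵢ H_q(pᵢ) ≥ 0, where p̄ = (1/n) Σᵢ pᵢ. -/
noncomputable def tsallisEntropy (d : ℕ) (q : ℝ) (p : Fin d → ℝ) : ℝ :=
  if q = 1 then - ∑ j, p j * Real.log (p j)
  else (1 / (q - 1)) * (1 - ∑ j, (p j) ^ q)

lemma jensen_aux (d n : ℕ) (hn : 0 < n) (f : ℝ → ℝ) (hf : ConcaveOn ℝ (Set.Ici 0) f)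
    (p : Fin n → Fin d → ℝ) (hp : ∀ i j, 0 ≤ p i j) :
    (1 / (n:ℝ)) * ∑ i, ∑ j, f (p i j) ≤ ∑ j, f ((1 / (n:ℝ)) * ∑ i, p i j) := by
  have hn' : (0:ℝ) < n := Nat.cast_pos.mpr hn
  have key : ∀ j, (1 / (n:ℝ)) * ∑ i, f (p i j) ≤ f ((1 / (n:ℝ)) * ∑ i, p i j) := by
    intro j
    have h := hf.le_map_sum (t := Finset.univ) (w := fun _ : Fin n => 1 / (n:ℝ))
      (p := fun i => p i j)
      (fun i _ => by positivity)
      (by simp [Finset.sum_const]; field_simp)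
      (fun i _ => hp i j)
    simpa [smul_eq_mul, Finset.mul_sum] using h
  calc (1 / (n:ℝ)) * ∑ i, ∑ j, f (p i j)
      = ∑ j, (1 / (n:ℝ)) * ∑ i, f (p i j) := by
        rw [Finset.sum_comm, Finset.mul_sum]
    _ ≤ ∑ j, f ((1 / (n:ℝ)) * ∑ i, p i j) :=
        Finset.sum_le_sum fun j _ => key j

theorem jensen_tsallis_q_difference_nonneg (d n : ℕ) (hn : 0 < n) (q : ℝ) (hq : 1 ≤ q)
    (p : Fin n → Fin d → ℝ)
    (hp : ∀ i j, p i j ∈ Set.Icc (0:ℝ) 1) (hs : ∀ i, ∑ j, p i j = 1) :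
    0 ≤ tsallisEntropy d q (fun j => (1 / (n:ℝ)) * ∑ i, p i j)
        - (n:ℝ) ^ (-q) * ∑ i, tsallisEntropy d q (p i) := by
  have hn' : (0:ℝ) < n := Nat.cast_pos.mpr hn
  rcases eq_or_lt_of_le hq with hq1 | hq1
  · -- q = 1 : Shannon case
    subst hq1
    simp only [tsallisEntropy, if_pos rfl, reduceIte]
    have hJ := jensen_aux d n hn Real.negMulLog Real.concaveOn_negMulLog p
      (fun i j => (hp i j).1)
    simp only [Real.negMulLog, neg_mul, Finset.sum_neg_distrib] at hJ
    have hc : (n:ℝ) ^ (-(1:ℝ)) = 1 / (n:ℝ) := by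
      rw [Real.rpow_neg_one]; exact (one_div _).symm
    rw [hc]
    simp only [Finset.sum_neg_distrib, mul_neg] at hJ ⊢
    linarith
  · -- q > 1
    have hqne : q ≠ 1 := ne_of_gt hq1
    simp only [tsallisEntropy, if_neg hqne]
    set g : Fin d → ℝ := fun j => (1 / (n:ℝ)) * ∑ i, p i j with hg
    have hconc : ConcaveOn ℝ (Set.Ici 0) (fun x : ℝ => -(x ^ q)) :=
      (convexOn_rpow hq).neg
    have hJ := jensen_aux d n hn (fun x => -(x ^ q)) hconc p (fun i j => (hp i j).1)
    simp only [Finset.sum_neg_distrib, mul_neg, neg_le_neg_iff] at hJ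
    -- hJ : ∑ j, g j ^ q ≤ (1/n) * ∑ i, ∑ j, p i j ^ q
    have hS : ∀ i, ∑ j, (p i j) ^ q ≤ 1 := by
      intro i
      calc ∑ j, (p i j) ^ q ≤ ∑ j, p i j := by
            apply Finset.sum_le_sum
            intro j _
            rcases eq_or_lt_of_le (hp i j).1 with h0 | h0
            · rw [← h0, Real.zero_rpow (by linarith : q ≠ 0)]
            · calc (p i j) ^ q ≤ (p i j) ^ (1:ℝ) :=
                    Real.rpow_le_rpow_of_exponent_ge h0 (hp i j).2 hq
                _ = p i j := Real.rpow_one _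
        _ = 1 := hs i
    have hSnn : ∀ i, 0 ≤ ∑ j, (p i j) ^ q := fun i =>
      Finset.sum_nonneg fun j _ => Real.rpow_nonneg (hp i j).1 q
    have hc1 : (n:ℝ) ^ (-q) ≤ 1 / (n:ℝ) := by
      rw [one_div, ← Real.rpow_neg_one (n:ℝ)]
      exact Real.rpow_le_rpow_of_exponent_le (by exact_mod_cast hn) (by linarith)
    have hc0 : (0:ℝ) ≤ (n:ℝ) ^ (-q) := Real.rpow_nonneg hn'.le _
    have hr : (0:ℝ) < 1 / (q - 1) := by
      have : (0:ℝ) < q - 1 := by linarith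
      positivity
    set c := (n:ℝ) ^ (-q)
    set r := 1 / (q - 1)
    have hsum : ∑ i, r * (1 - ∑ j, (p i j) ^ q) = r * ((n:ℝ) - ∑ i, ∑ j, (p i j) ^ q) := by
      rw [← Finset.mul_sum, Finset.sum_sub_distrib]
      simp [Finset.sum_const]
    rw [hsum]
    have hT : (0:ℝ) ≤ (n:ℝ) - ∑ i, ∑ j, (p i j) ^ q := by
      have : ∑ i, ∑ j, (p i j) ^ q ≤ ∑ i : Fin n, (1:ℝ) :=
        Finset.sum_le_sum fun i _ => hS i
      simp only [Finset.sum_const, Finset.card_univ, Fintype.card_fin, nsmul_eq_mul,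
        mul_one] at this
      linarith
    have hkey : c * (r * ((n:ℝ) - ∑ i, ∑ j, (p i j) ^ q))
        ≤ (1 / (n:ℝ)) * (r * ((n:ℝ) - ∑ i, ∑ j, (p i j) ^ q)) :=
      mul_le_mul_of_nonneg_right hc1 (by positivity)
    have hfin : (1 / (n:ℝ)) * (r * ((n:ℝ) - ∑ i, ∑ j, (p i j) ^ q))
        ≤ r * (1 - ∑ j, g j ^ q) := by
      have h1 : (1 / (n:ℝ)) * (n:ℝ) = 1 := by field_simp
      have h2 : (1 / (n:ℝ)) * ((n:ℝ) - ∑ i, ∑ j, (p i j) ^ q)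
          = 1 - (1 / (n:ℝ)) * ∑ i, ∑ j, (p i j) ^ q := by
        field_simp
      calc (1 / (n:ℝ)) * (r * ((n:ℝ) - ∑ i, ∑ j, (p i j) ^ q))
          = r * ((1 / (n:ℝ)) * ((n:ℝ) - ∑ i, ∑ j, (p i j) ^ q)) := by ring
        _ = r * (1 - (1 / (n:ℝ)) * ∑ i, ∑ j, (p i j) ^ q) := by rw [h2]
        _ ≤ r * (1 - ∑ j, g j ^ q) := by
            apply mul_le_mul_of_nonneg_left _ hr.le
            linarith [hJ]
    linarith
end

section
/- For q ∈ [0,2], the extended Jensen-Tsallis kernel k_q(x,y) = (1/(q-1)) Σ_j ((x(j)+y(j))^q − x(j)^q − y(j)^q) (for q ≠ 1; with the limiting form Σ_j ((x(j)+y(j))ln(x(j)+y(j)) − x(j)ln x(j) − y(j)ln y(j)) at q = 1) is a positive semi-definite kernel on [0,1]^d. -/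
/-!
For `0 < q < 2`, `q ≠ 1`, the kernel `((s + t)^q - s^q - t^q) / (q - 1)` on `[0, ∞)` is a positive
multiple of `∫₀^∞ (1 - e^{-ls}) (1 - e^{-lt}) l^{-q-1} dl`, a mixture of rank-one kernels. This
follows from the scaling law `∫₀^∞ F(lt) l^{-q-1} dl = t^q ∫₀^∞ F(l) l^{-q-1} dl` applied to
`F(u) = e^{-u} - 1` when `q < 1` and to `F(u) = e^{-u} - 1 + u` when `q > 1`: both satisfy
`F(u + v) - F(u) - F(v) = (1 - e^{-u}) (1 - e^{-v})`, and `(q - 1) F > 0` on `(0, ∞)`.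
At `q = 1` the kernel is the limit as `q → 1`; at `q = 0` and `q = 2` it is `1` and `2st`.
The Jensen-Tsallis kernel is the sum of these kernels over the coordinates.
-/

noncomputable def jtKernel (d : ℕ) (q : ℝ) (x y : Fin d → ℝ) : ℝ :=
  if q = 1 then
    ∑ j, ((x j + y j) * Real.log (x j + y j)
      - x j * Real.log (x j) - y j * Real.log (y j))
  else (1 / (q - 1)) * ∑ j, ((x j + y j) ^ q - (x j) ^ q - (y j) ^ q)

open MeasureTheory Set Filter Topology Real

def IsPosSemidefKernelOn {α : Type*} (S : Set α) (k : α → α → ℝ) : Prop :=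
  ∀ ⦃N : ℕ⦄ (x : Fin N → α), (∀ i, x i ∈ S) → ∀ c : Fin N → ℝ,
    0 ≤ ∑ i, ∑ j, c i * c j * k (x i) (x j)

namespace IsPosSemidefKernelOn

variable {α : Type*} {S : Set α} {k : α → α → ℝ}

theorem congr {k' : α → α → ℝ} (hk : IsPosSemidefKernelOn S k)
    (h : ∀ s ∈ S, ∀ t ∈ S, k s t = k' s t) : IsPosSemidefKernelOn S k' := by
  intro N x hx c
  simpa only [h _ (hx _) _ (hx _)] using hk x hx c

theorem mul_self (S : Set α) (f : α → ℝ) : IsPosSemidefKernelOn S fun s t => f s * f t := by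
  intro N x _ c
  have h : ∑ i, ∑ j, c i * c j * (f (x i) * f (x j)) = (∑ i, c i * f (x i)) ^ 2 := by
    rw [sq, Finset.sum_mul_sum]
    exact Finset.sum_congr rfl fun i _ => Finset.sum_congr rfl fun j _ => by ring
  rw [h]
  positivity

theorem const_mul (hk : IsPosSemidefKernelOn S k) {a : ℝ} (ha : 0 ≤ a) :
    IsPosSemidefKernelOn S fun s t => a * k s t := by
  intro N x hx c
  have h : ∑ i, ∑ j, c i * c j * (a * k (x i) (x j)) =
      a * ∑ i, ∑ j, c i * c j * k (x i) (x j) := by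
    simp only [Finset.mul_sum]
    exact Finset.sum_congr rfl fun i _ => Finset.sum_congr rfl fun j _ => by ring
  rw [h]
  exact mul_nonneg ha (hk x hx c)

theorem pi_sum {ι : Type*} [Fintype ι] {k : ι → α → α → ℝ}
    (hk : ∀ j, IsPosSemidefKernelOn S (k j)) :
    IsPosSemidefKernelOn {x : ι → α | ∀ j, x j ∈ S} fun x y => ∑ j, k j (x j) (y j) := by
  intro N x hx c
  have h : ∑ i, ∑ i', c i * c i' * ∑ j : ι, k j (x i j) (x i' j) =
      ∑ j, ∑ i, ∑ i', c i * c i' * k j (x i j) (x i' j) := by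
    simp only [Finset.mul_sum]
    calc _ = ∑ i, ∑ j, ∑ i', c i * c i' * k j (x i j) (x i' j) :=
          Finset.sum_congr rfl fun i _ => Finset.sum_comm
      _ = _ := Finset.sum_comm
  rw [h]
  exact Finset.sum_nonneg fun j _ => hk j (fun i => x i j) (fun i => hx i j) c

theorem integral {β : Type*} [MeasurableSpace β] {μ : Measure β} {K : β → α → α → ℝ}
    (hK : ∀ᵐ l ∂μ, IsPosSemidefKernelOn S (K l))
    (hint : ∀ s ∈ S, ∀ t ∈ S, Integrable (fun l => K l s t) μ) :
    IsPosSemidefKernelOn S fun s t => ∫ l, K l s t ∂μ := by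
  intro N x hx c
  have hint' : ∀ i j, Integrable (fun l => c i * c j * K l (x i) (x j)) μ :=
    fun i j => (hint _ (hx i) _ (hx j)).const_mul _
  have h : ∑ i, ∑ j, c i * c j * ∫ l, K l (x i) (x j) ∂μ =
      ∫ l, ∑ i, ∑ j, c i * c j * K l (x i) (x j) ∂μ := by
    rw [integral_finsetSum _ fun i _ => integrable_finsetSum _ fun j _ => hint' i j]
    refine Finset.sum_congr rfl fun i _ => ?_
    rw [integral_finsetSum _ fun j _ => hint' i j]
    exact Finset.sum_congr rfl fun j _ => (integral_const_mul _ _).symm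
  rw [h]
  exact integral_nonneg_of_ae (hK.mono fun l hl => hl x hx c)

theorem of_tendsto {β : Type*} {L : Filter β} [L.NeBot] {K : β → α → α → ℝ}
    (hK : ∀ᶠ b in L, IsPosSemidefKernelOn S (K b))
    (hlim : ∀ s ∈ S, ∀ t ∈ S, Tendsto (fun b => K b s t) L (𝓝 (k s t))) :
    IsPosSemidefKernelOn S k := by
  intro N x hx c
  refine ge_of_tendsto (tendsto_finsetSum _ fun i _ => tendsto_finsetSum _ fun j _ =>
    (hlim _ (hx i) _ (hx j)).const_mul (c i * c j)) ?_
  exact hK.mono fun b hb => hb x hx c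

end IsPosSemidefKernelOn

theorem integrableOn_Ioi_mul_rpow_of_abs_le {F : ℝ → ℝ} (hF : Continuous F) {a b r : ℝ}
    (ha : -1 < a + r) (hb : b + r < -1)
    (h₀ : ∀ x ∈ Ioc (0 : ℝ) 1, |F x| ≤ x ^ a) (h₁ : ∀ x ∈ Ioi (1 : ℝ), |F x| ≤ x ^ b) :
    IntegrableOn (fun x => F x * x ^ r) (Ioi 0) := by
  have hmeas : ∀ s ⊆ Ioi (0 : ℝ), MeasurableSet s →
      AEStronglyMeasurable (fun x => F x * x ^ r) (volume.restrict s) := fun s hs hms =>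
    ((hF.continuousOn.mul (continuousOn_id.rpow_const fun x hx => Or.inl (ne_of_gt hx))).mono
      hs).aestronglyMeasurable hms
  have hbound : ∀ c, ∀ x > (0 : ℝ), |F x| ≤ x ^ c → ‖F x * x ^ r‖ ≤ x ^ (c + r) := by
    intro c x hx h
    rw [norm_mul, norm_eq_abs, norm_of_nonneg (rpow_nonneg hx.le r), rpow_add hx]
    gcongr
  rw [← Ioc_union_Ioi_eq_Ioi zero_le_one]
  refine IntegrableOn.union ?_ ?_
  · have hint : IntegrableOn (fun x : ℝ => x ^ (a + r)) (Ioc 0 1) :=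
      (intervalIntegrable_iff_integrableOn_Ioc_of_le zero_le_one).mp
        (intervalIntegral.intervalIntegrable_rpow' ha)
    refine hint.mono' (hmeas _ Ioc_subset_Ioi_self measurableSet_Ioc) ?_
    filter_upwards [ae_restrict_mem measurableSet_Ioc] with x hx
    exact hbound a x hx.1 (h₀ x hx)
  · refine (integrableOn_Ioi_rpow_of_lt hb one_pos).mono'
      (hmeas _ (Ioi_subset_Ioi zero_le_one) measurableSet_Ioi) ?_
    filter_upwards [ae_restrict_mem measurableSet_Ioi] with x hx
    exact hbound b x (zero_lt_one.trans hx) (h₁ x hx)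

section Scaling

variable {F : ℝ → ℝ} {q t : ℝ}

theorem comp_mul_mul_rpow_eq {l : ℝ} (hl : 0 ≤ l) (ht : 0 < t) :
    F (l * t) * l ^ (-q - 1) = t ^ (q + 1) * (F (l * t) * (l * t) ^ (-q - 1)) := by
  have h : t ^ (q + 1) * t ^ (-q - 1) = 1 := by rw [← rpow_add ht]; simp
  rw [mul_rpow hl ht.le]
  linear_combination (-(F (l * t) * l ^ (-q - 1))) * h

theorem integrableOn_comp_mul_right_mul_rpow (hF0 : F 0 = 0)
    (hF : IntegrableOn (fun l => F l * l ^ (-q - 1)) (Ioi 0)) (ht : 0 ≤ t) :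
    IntegrableOn (fun l => F (l * t) * l ^ (-q - 1)) (Ioi 0) := by
  rcases ht.eq_or_lt with rfl | ht
  · simp [hF0]
  refine (integrableOn_congr_fun (fun l hl => comp_mul_mul_rpow_eq (le_of_lt hl) ht)
    measurableSet_Ioi).mpr (Integrable.const_mul ?_ _)
  exact (integrableOn_Ioi_comp_mul_right_iff (fun l => F l * l ^ (-q - 1)) 0 ht).mpr
    (by rwa [zero_mul])

theorem integral_comp_mul_right_mul_rpow (hq : 0 < q) (hF0 : F 0 = 0) (ht : 0 ≤ t) :
    ∫ l in Ioi 0, F (l * t) * l ^ (-q - 1) = t ^ q * ∫ l in Ioi 0, F l * l ^ (-q - 1) := by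
  rcases ht.eq_or_lt with rfl | ht
  · simp [hF0, zero_rpow hq.ne']
  rw [setIntegral_congr_fun measurableSet_Ioi fun l hl => comp_mul_mul_rpow_eq (le_of_lt hl) ht,
    integral_const_mul, integral_comp_mul_right_Ioi (fun l => F l * l ^ (-q - 1)) 0 ht,
    zero_mul, smul_eq_mul, ← mul_assoc, ← rpow_neg_one, ← rpow_add ht]
  norm_num

end Scaling

theorem isPosSemidefKernelOn_integral_mul_sub_rpow {q : ℝ} (hq : 0 < q) {F g : ℝ → ℝ}
    (hF0 : F 0 = 0) (hF : IntegrableOn (fun l => F l * l ^ (-q - 1)) (Ioi 0))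
    (hFg : ∀ u v, 0 ≤ u → 0 ≤ v → F (u + v) - F u - F v = g u * g v) :
    IsPosSemidefKernelOn (Ici 0) fun s t =>
      (∫ l in Ioi 0, F l * l ^ (-q - 1)) * ((s + t) ^ q - s ^ q - t ^ q) := by
  have hrepr : ∀ s ∈ Ici (0 : ℝ), ∀ t ∈ Ici (0 : ℝ),
      EqOn (fun l => l ^ (-q - 1) * (g (l * s) * g (l * t)))
        (fun l => F (l * (s + t)) * l ^ (-q - 1) - F (l * s) * l ^ (-q - 1)
          - F (l * t) * l ^ (-q - 1)) (Ioi 0) := by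
    intro s hs t ht l hl
    dsimp only
    rw [mul_add, ← hFg _ _ (mul_nonneg (le_of_lt hl) hs) (mul_nonneg (le_of_lt hl) ht)]
    ring
  have hint : ∀ t : ℝ, 0 ≤ t → IntegrableOn (fun l => F (l * t) * l ^ (-q - 1)) (Ioi 0) :=
    fun t ht => integrableOn_comp_mul_right_mul_rpow hF0 hF ht
  have hpsd : IsPosSemidefKernelOn (Ici 0) fun s t =>
      ∫ l in Ioi 0, l ^ (-q - 1) * (g (l * s) * g (l * t)) := by
    refine IsPosSemidefKernelOn.integral ?_ fun s hs t ht => ?_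
    · filter_upwards [ae_restrict_mem measurableSet_Ioi] with l hl
      exact (IsPosSemidefKernelOn.mul_self _ fun s => g (l * s)).const_mul
        (rpow_nonneg (le_of_lt hl) _)
    · exact (integrableOn_congr_fun (hrepr s hs t ht) measurableSet_Ioi).mpr
        (((hint _ (add_nonneg hs ht)).sub (hint s hs)).sub (hint t ht))
  refine hpsd.congr fun s hs t ht => ?_
  have hst : 0 ≤ s + t := add_nonneg hs ht
  rw [setIntegral_congr_fun measurableSet_Ioi (hrepr s hs t ht),
    integral_sub (f := fun l => F (l * (s + t)) * l ^ (-q - 1) - F (l * s) * l ^ (-q - 1))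
      ((hint _ hst).sub (hint s hs)) (hint t ht),
    integral_sub (hint _ hst) (hint s hs),
    integral_comp_mul_right_mul_rpow hq hF0 hst,
    integral_comp_mul_right_mul_rpow hq hF0 hs, integral_comp_mul_right_mul_rpow hq hF0 ht]
  ring

theorem setIntegral_Ioi_pos {f : ℝ → ℝ} {a : ℝ} (hf : IntegrableOn f (Ioi a))
    (hpos : ∀ x ∈ Ioi a, 0 < f x) : 0 < ∫ x in Ioi a, f x := by
  rw [setIntegral_pos_iff_support_of_nonneg_ae
    ((ae_restrict_mem measurableSet_Ioi).mono fun x hx => (hpos x hx).le) hf]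
  calc (0 : ENNReal) < volume (Ioi a) := by simp
    _ ≤ volume (Function.support f ∩ Ioi a) :=
      measure_mono fun x hx => ⟨(hpos x hx).ne', hx⟩

noncomputable def tsallisKernel (q s t : ℝ) : ℝ :=
  if q = 1 then (s + t) * log (s + t) - s * log s - t * log t
  else 1 / (q - 1) * ((s + t) ^ q - s ^ q - t ^ q)

theorem isPosSemidefKernelOn_tsallisKernel_of_integral {q : ℝ} (hq : 0 < q) (hq1 : q ≠ 1)
    {F g : ℝ → ℝ} (hF0 : F 0 = 0) (hF : IntegrableOn (fun l => F l * l ^ (-q - 1)) (Ioi 0))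
    (hFg : ∀ u v, 0 ≤ u → 0 ≤ v → F (u + v) - F u - F v = g u * g v)
    (hsign : ∀ l ∈ Ioi (0 : ℝ), 0 < (q - 1) * F l) :
    IsPosSemidefKernelOn (Ici 0) (tsallisKernel q) := by
  have hI : 0 < (q - 1) * ∫ l in Ioi 0, F l * l ^ (-q - 1) := by
    rw [← integral_const_mul]
    refine setIntegral_Ioi_pos (hF.const_mul _) fun l hl => ?_
    rw [← mul_assoc]
    exact mul_pos (hsign l hl) (rpow_pos_of_pos hl _)
  have hq1' : q - 1 ≠ 0 := sub_ne_zero.mpr hq1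
  have hI0 := right_ne_zero_of_mul hI.ne'
  refine ((isPosSemidefKernelOn_integral_mul_sub_rpow hq hF0 hF hFg).const_mul
    (inv_nonneg.mpr hI.le)).congr fun s _ t _ => ?_
  rw [tsallisKernel, if_neg hq1]
  field_simp

theorem abs_exp_neg_sub_one_le {x : ℝ} (hx : 0 ≤ x) : |exp (-x) - 1| ≤ x := by
  rw [abs_sub_comm, abs_of_nonneg (sub_nonneg.mpr (exp_le_one_iff.mpr (neg_nonpos.mpr hx)))]
  linarith [add_one_le_exp (-x)]

theorem abs_exp_neg_sub_one_le_one {x : ℝ} (hx : 0 ≤ x) : |exp (-x) - 1| ≤ 1 := by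
  rw [abs_sub_comm, abs_of_nonneg (sub_nonneg.mpr (exp_le_one_iff.mpr (neg_nonpos.mpr hx)))]
  linarith [exp_pos (-x)]

theorem exp_neg_sub_one_add_le_sq {x : ℝ} (hx : 0 ≤ x) : exp (-x) - 1 + x ≤ x ^ 2 := by
  -- `(1 + x) e⁻ˣ ≤ 1` gives `e⁻ˣ - 1 + x ≤ x (1 - e⁻ˣ)`, and `1 - e⁻ˣ ≤ x`
  have h₁ : (1 + x) * exp (-x) ≤ 1 := by
    calc (1 + x) * exp (-x) ≤ exp x * exp (-x) := by
          gcongr; linarith [add_one_le_exp x]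
      _ = 1 := by rw [← exp_add, add_neg_cancel, exp_zero]
  nlinarith [add_one_le_exp (-x)]

theorem isPosSemidefKernelOn_tsallisKernel_of_lt_one {q : ℝ} (hq0 : 0 < q) (hq1 : q < 1) :
    IsPosSemidefKernelOn (Ici 0) (tsallisKernel q) := by
  refine isPosSemidefKernelOn_tsallisKernel_of_integral hq0 hq1.ne
    (F := fun u => exp (-u) - 1) (g := fun u => 1 - exp (-u)) (by simp) ?_ ?_ ?_
  · refine integrableOn_Ioi_mul_rpow_of_abs_le (a := 1) (b := 0) (by fun_prop)
      (by linarith) (by linarith) (fun x hx => ?_) (fun x hx => ?_)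
    · simpa using abs_exp_neg_sub_one_le hx.1.le
    · simpa using abs_exp_neg_sub_one_le_one (zero_le_one.trans hx.le)
  · intro u v _ _
    rw [neg_add, exp_add]
    ring
  · intro l hl
    have : exp (-l) < 1 := exp_lt_one_iff.mpr (neg_lt_zero.mpr hl)
    nlinarith

theorem isPosSemidefKernelOn_tsallisKernel_of_one_lt {q : ℝ} (hq1 : 1 < q) (hq2 : q < 2) :
    IsPosSemidefKernelOn (Ici 0) (tsallisKernel q) := by
  refine isPosSemidefKernelOn_tsallisKernel_of_integral (by linarith) hq1.ne'
    (F := fun u => exp (-u) - 1 + u) (g := fun u => 1 - exp (-u)) (by simp) ?_ ?_ ?_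
  · refine integrableOn_Ioi_mul_rpow_of_abs_le (a := 2) (b := 1) (by fun_prop)
      (by linarith) (by linarith) (fun x hx => ?_) (fun x hx => ?_)
    · have hx0 : 0 ≤ x := hx.1.le
      rw [abs_of_nonneg (by linarith [add_one_le_exp (-x)]), rpow_two]
      exact exp_neg_sub_one_add_le_sq hx0
    · have hx0 : 0 ≤ x := zero_le_one.trans hx.le
      rw [abs_of_nonneg (by linarith [add_one_le_exp (-x)]), rpow_one]
      linarith [exp_le_one_iff.mpr (neg_nonpos.mpr hx0)]
  · intro u v _ _
    rw [neg_add, exp_add]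
    ring
  · intro l hl
    have : -l + 1 < exp (-l) := add_one_lt_exp (neg_ne_zero.mpr (ne_of_gt hl))
    nlinarith

theorem hasDerivAt_const_rpow_of_nonneg {a x : ℝ} (ha : 0 ≤ a) (hx : x ≠ 0) :
    HasDerivAt (fun p : ℝ => a ^ p) (a ^ x * log a) x := by
  rcases ha.eq_or_lt with rfl | ha
  · have h : (fun p => (0 : ℝ) ^ p) =ᶠ[𝓝 x] fun _ => 0 := by
      filter_upwards [isOpen_ne.mem_nhds hx] with p hp
      exact zero_rpow hp
    simpa using (hasDerivAt_const x (0 : ℝ)).congr_of_eventuallyEq h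
  · exact (hasStrictDerivAt_const_rpow ha x).hasDerivAt

theorem tendsto_tsallisKernel_one {s t : ℝ} (hs : 0 ≤ s) (ht : 0 ≤ t) :
    Tendsto (fun q => tsallisKernel q s t) (𝓝[≠] 1) (𝓝 (tsallisKernel 1 s t)) := by
  have hderiv : HasDerivAt (fun p : ℝ => (s + t) ^ p - s ^ p - t ^ p)
      ((s + t) * log (s + t) - s * log s - t * log t) 1 := by
    simpa using ((hasDerivAt_const_rpow_of_nonneg (add_nonneg hs ht) one_ne_zero).fun_sub
      (hasDerivAt_const_rpow_of_nonneg hs one_ne_zero)).fun_sub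
      (hasDerivAt_const_rpow_of_nonneg ht one_ne_zero)
  rw [show tsallisKernel 1 s t = _ from if_pos rfl]
  refine (hasDerivAt_iff_tendsto_slope.mp hderiv).congr' ?_
  filter_upwards [self_mem_nhdsWithin] with p hp
  rw [slope_def_field, tsallisKernel, if_neg (mem_compl_singleton_iff.mp hp)]
  simp [div_eq_inv_mul]

theorem isPosSemidefKernelOn_tsallisKernel_one :
    IsPosSemidefKernelOn (Ici 0) (tsallisKernel 1) := by
  refine IsPosSemidefKernelOn.of_tendsto (L := 𝓝[≠] 1) ?_
    fun s hs t ht => tendsto_tsallisKernel_one hs ht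
  filter_upwards [nhdsWithin_le_nhds (Ioo_mem_nhds one_pos one_lt_two), self_mem_nhdsWithin]
    with p hp hp1
  rcases lt_or_gt_of_ne hp1 with hp1 | hp1
  · exact isPosSemidefKernelOn_tsallisKernel_of_lt_one hp.1 hp1
  · exact isPosSemidefKernelOn_tsallisKernel_of_one_lt hp1 hp.2

theorem isPosSemidefKernelOn_tsallisKernel {q : ℝ} (hq : q ∈ Icc 0 2) :
    IsPosSemidefKernelOn (Ici 0) (tsallisKernel q) := by
  rcases hq.1.eq_or_lt with rfl | hq0
  · exact (IsPosSemidefKernelOn.mul_self _ fun _ => 1).congr fun s _ t _ => by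
      norm_num [tsallisKernel]
  rcases hq.2.eq_or_lt with rfl | hq2
  · exact ((IsPosSemidefKernelOn.mul_self _ id).const_mul zero_le_two).congr fun s _ t _ => by
      norm_num [tsallisKernel]
      ring
  rcases lt_trichotomy q 1 with hq1 | rfl | hq1
  · exact isPosSemidefKernelOn_tsallisKernel_of_lt_one hq0 hq1
  · exact isPosSemidefKernelOn_tsallisKernel_one
  · exact isPosSemidefKernelOn_tsallisKernel_of_one_lt hq1 hq2

theorem jtKernel_eq_sum_tsallisKernel (d : ℕ) (q : ℝ) (x y : Fin d → ℝ) :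
    jtKernel d q x y = ∑ j, tsallisKernel q (x j) (y j) := by
  unfold jtKernel tsallisKernel
  split_ifs
  · rfl
  · rw [Finset.mul_sum]

theorem jt_kernel_psd (d : ℕ) (q : ℝ) (hq : q ∈ Set.Icc (0:ℝ) 2)
    (N : ℕ) (x : Fin N → Fin d → ℝ)
    (hx : ∀ i j, x i j ∈ Set.Icc (0:ℝ) 1) (c : Fin N → ℝ) :
    0 ≤ ∑ i, ∑ j, c i * c j * jtKernel d q (x i) (x j) := by
  simpa only [jtKernel_eq_sum_tsallisKernel] using
    (IsPosSemidefKernelOn.pi_sum fun _ : Fin d => isPosSemidefKernelOn_tsallisKernel hq) x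
      (fun i j => (hx i j).1) c
end
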